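/- Let 𝒢(s) = Ĝ(−s), where Ĝ is the Legendre transform of G(ε) = ∫₀^∞ ξ² (max(α − ε√(1+ξ²), 0))^{σ+1} dξ with σ ∈ (0,3/2), α > 0 (and G(ε) = +∞ for ε ≤ 0). Then 𝒢(0) = 0, 𝒢 is differentiable at 0 from the right with 𝒢'(0) = −α, 𝒢'(s) ∈ (−α, 0) for s > 0, lim_{s→∞} 𝒢'(s) = 0, 𝒢(s) < 0 for s > 0, and lim_{s→∞} 𝒢(s) = −∞. -/

import Mathlib

/-- `G(ε) = ∫₀^∞ ξ² (max(α − ε√(1+ξ²), 0))^{σ+1} dξ` (for `ε > 0`). -/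
noncomputable def Gfun (σ α ε : ℝ) : ℝ :=
  ∫ ξ in Set.Ioi (0:ℝ), ξ ^ 2 * (max (α - ε * Real.sqrt (1 + ξ ^ 2)) 0) ^ (σ + 1)

/-- Legendre transform of `G`, where `G = +∞` on `(−∞,0]` so the supremum is
taken over `ε > 0`. -/
noncomputable def GhatFun (σ α u : ℝ) : ℝ :=
  sSup {y : ℝ | ∃ ε : ℝ, 0 < ε ∧ y = ε * u - Gfun σ α ε}

/-- `𝒢(s) = Ĝ(−s)`. -/
noncomputable def calG (σ α s : ℝ) : ℝ := GhatFun σ α (-s)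

/-! `G` is nonnegative, vanishes on `[α, ∞)`, blows up at `0⁺`, and is differentiable on `(0, ∞)`
with `G' = -H`, where `H` is strictly decreasing on `(0, α]`, vanishes on `[α, ∞)` and blows up at
`0⁺` (it dominates a multiple of `G`). By Darboux's theorem, for every `s > 0` there is a unique
`ε*(s) ∈ (0, α)` with `H(ε*(s)) = s`; it minimises `ε s + G ε`, so
`𝒢(s) = -ε*(s) s - G(ε*(s))`. These are supporting lines of `𝒢`, and `ε*` is a monotone bijection
`(0, ∞) → (0, α)`, hence continuous, so `𝒢'(s) = -ε*(s)`. Everything else follows from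
`ε*(s) → α` as `s → 0⁺` and `ε*(s) → 0` as `s → ∞`. -/

open Real MeasureTheory Set Filter Topology

lemma hasDerivAt_max_zero_rpow {q : ℝ} (hq : 1 < q) (x : ℝ) :
    HasDerivAt (fun x : ℝ => max x 0 ^ q) (q * max x 0 ^ (q - 1)) x := by
  have hcont : ∀ r : ℝ, 0 < r → Continuous fun x : ℝ => max x 0 ^ r := fun r hr =>
    Continuous.rpow_const (f := fun x : ℝ => max x 0) (continuous_id.max continuous_const)
      fun _ => Or.inr hr.le
  refine hasDerivAt_of_hasDerivAt_of_ne' (x := 0) (g := fun x => q * max x 0 ^ (q - 1))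
    (fun y hy => ?_) (hcont q (by linarith)).continuousAt
    ((continuous_const.mul (hcont (q - 1) (by linarith))).continuousAt) x
  rcases hy.lt_or_gt with hy | hy
  · have h : (fun x : ℝ => max x 0 ^ q) =ᶠ[𝓝 y] fun _ => 0 := by
      filter_upwards [Iio_mem_nhds hy] with z hz
      rw [max_eq_right hz.le, zero_rpow (by linarith)]
    rw [max_eq_right hy.le, zero_rpow (by linarith), mul_zero]
    exact (hasDerivAt_const y 0).congr_of_eventuallyEq h
  · have h : (fun x : ℝ => max x 0 ^ q) =ᶠ[𝓝 y] fun z => z ^ q := by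
      filter_upwards [Ioi_mem_nhds hy] with z hz
      rw [max_eq_left hz.le]
    rw [max_eq_left hy.le]
    exact (hasDerivAt_rpow_const (Or.inl hy.ne')).congr_of_eventuallyEq h

lemma setIntegral_pos_of_continuous {f : ℝ → ℝ} {s : Set ℝ} (hs : IsOpen s) (hf : Continuous f)
    (hfi : IntegrableOn f s) (hnn : ∀ x ∈ s, 0 ≤ f x) {x₀ : ℝ} (hx₀ : x₀ ∈ s) (hpos : 0 < f x₀) :
    0 < ∫ x in s, f x := by
  rw [setIntegral_pos_iff_support_of_nonneg_ae ((ae_restrict_iff' hs.measurableSet).2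
    (Eventually.of_forall hnn)) hfi]
  exact (hf.isOpen_support.inter hs).measure_pos volume ⟨x₀, hpos.ne', hx₀⟩

lemma mul_sub_le_setIntegral {f : ℝ → ℝ} {s : Set ℝ} (hs : MeasurableSet s)
    (hfi : IntegrableOn f s) (hnn : ∀ x ∈ s, 0 ≤ f x) {a b m : ℝ} (hab : a ≤ b)
    (hsub : Icc a b ⊆ s) (hm : ∀ x ∈ Icc a b, m ≤ f x) : m * (b - a) ≤ ∫ x in s, f x := by
  calc m * (b - a) ≤ ∫ x in Icc a b, f x := by
        simpa [Real.volume_real_Icc_of_le hab] using setIntegral_ge_of_const_le_real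
          measurableSet_Icc (by simp) hm (hfi.mono_set hsub)
    _ ≤ ∫ x in s, f x := setIntegral_mono_set hfi
        ((ae_restrict_iff' hs).2 (Eventually.of_forall hnn)) hsub.eventuallyLE

lemma hasDerivAt_of_supporting_lines {f g : ℝ → ℝ} {U : Set ℝ} {x : ℝ} (hU : U ∈ 𝓝 x)
    (hsupp : ∀ y ∈ U, ∀ z ∈ U, f y + g y * (z - y) ≤ f z) (hg : ContinuousAt g x) :
    HasDerivAt f (g x) x := by
  rw [hasDerivAt_iff_tendsto_slope, tendsto_iff_norm_sub_tendsto_zero]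
  refine squeeze_zero' (Eventually.of_forall fun _ => norm_nonneg _) ?_
    ((tendsto_iff_norm_sub_tendsto_zero.1 hg).mono_left nhdsWithin_le_nhds)
  filter_upwards [nhdsWithin_le_nhds hU, self_mem_nhdsWithin] with y hy hyx
  have hd : y - x ≠ 0 := sub_ne_zero.2 hyx
  have h₁ := hsupp x (mem_of_mem_nhds hU) y hy
  have h₂ := hsupp y hy x (mem_of_mem_nhds hU)
  -- `(slope - g x) * (y - x)` lies between `0` and `(g y - g x) * (y - x)`.
  have key : |slope f x y - g x| * |y - x| ≤ |g y - g x| * |y - x| := by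
    rw [← abs_mul, ← abs_mul, slope_def_field, sub_mul, div_mul_cancel₀ _ hd]
    rw [abs_of_nonneg (by linarith), abs_of_nonneg (by nlinarith)]
    nlinarith
  simpa only [Real.norm_eq_abs] using le_of_mul_le_mul_right key (abs_pos.2 hd)

lemma one_le_sqrt_one_add_sq (ξ : ℝ) : 1 ≤ √(1 + ξ ^ 2) :=
  one_le_sqrt.2 (by nlinarith)

lemma le_sqrt_one_add_sq (ξ : ℝ) : ξ ≤ √(1 + ξ ^ 2) :=
  (le_abs_self ξ).trans (abs_le_sqrt (by linarith))

noncomputable def trunc (α ε ξ : ℝ) : ℝ := max (α - ε * √(1 + ξ ^ 2)) 0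

section trunc

variable {α ε ξ : ℝ}

lemma trunc_nonneg : 0 ≤ trunc α ε ξ := le_max_right _ _

lemma trunc_le (hα : 0 ≤ α) (hε : 0 ≤ ε) : trunc α ε ξ ≤ α :=
  max_le (by nlinarith [sqrt_nonneg (1 + ξ ^ 2)]) hα

lemma trunc_eq_zero (h : α ≤ ε * √(1 + ξ ^ 2)) : trunc α ε ξ = 0 :=
  max_eq_right (by linarith)

lemma trunc_eq_zero_of_le (hα : 0 ≤ α) (h : α ≤ ε) : trunc α ε ξ = 0 :=
  trunc_eq_zero (by nlinarith [one_le_sqrt_one_add_sq ξ])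

lemma trunc_eq_zero_of_le_mul (hε : 0 ≤ ε) (h : α ≤ ε * ξ) : trunc α ε ξ = 0 :=
  trunc_eq_zero (h.trans (mul_le_mul_of_nonneg_left (le_sqrt_one_add_sq ξ) hε))

lemma trunc_anti {ε₁ ε₂ : ℝ} (h : ε₁ ≤ ε₂) : trunc α ε₂ ξ ≤ trunc α ε₁ ξ :=
  max_le_max_right _ (by nlinarith [sqrt_nonneg (1 + ξ ^ 2)])

lemma trunc_lt {ε₁ ε₂ : ℝ} (h : ε₁ < ε₂) (hpos : 0 < α - ε₁ * √(1 + ξ ^ 2)) :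
    trunc α ε₂ ξ < trunc α ε₁ ξ := by
  rw [trunc, trunc, max_eq_left hpos.le]
  exact max_lt (by nlinarith [one_le_sqrt_one_add_sq ξ]) hpos

lemma exists_pos_sub_mul_sqrt_pos (h : ε < α) : ∃ ξ > 0, 0 < α - ε * √(1 + ξ ^ 2) := by
  have hcont : ContinuousAt (fun ξ : ℝ => α - ε * √(1 + ξ ^ 2)) 0 := by fun_prop
  have h0 : 0 < α - ε * √(1 + 0 ^ 2) := by simpa using h
  obtain ⟨ξ, hξ, hξ₀⟩ := (((hcont.eventually (lt_mem_nhds h0)).filter_mono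
    nhdsWithin_le_nhds).and self_mem_nhdsWithin).exists (f := 𝓝[>] 0)
  exact ⟨ξ, hξ₀, hξ⟩

lemma continuous_trunc_rpow {p : ℝ} (hp : 0 ≤ p) : Continuous fun ξ => trunc α ε ξ ^ p :=
  Continuous.rpow_const (by unfold trunc; fun_prop) fun _ => Or.inr hp

lemma hasDerivAt_trunc_rpow {p : ℝ} (hp : 1 < p) :
    HasDerivAt (fun ε => trunc α ε ξ ^ p) (-(p * trunc α ε ξ ^ (p - 1) * √(1 + ξ ^ 2))) ε := by
  have hin : HasDerivAt (fun ε => α - ε * √(1 + ξ ^ 2)) (-√(1 + ξ ^ 2)) ε := by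
    simpa using ((hasDerivAt_id ε).mul_const (√(1 + ξ ^ 2))).const_sub α
  exact ((hasDerivAt_max_zero_rpow hp _).comp ε hin).congr_deriv (by rw [trunc]; ring)

end trunc

section integrand

variable {α ε p : ℝ} {w : ℝ → ℝ}

lemma norm_mul_trunc_rpow_le (hα : 0 ≤ α) (hp : 0 < p) (hε : 0 ≤ ε) {R : ℝ} (hR : α ≤ ε * R)
    {ξ : ℝ} (hξ : 0 ≤ ξ) :
    ‖w ξ * trunc α ε ξ ^ p‖ ≤ (Icc 0 R).indicator (fun ξ => ‖w ξ‖ * α ^ p) ξ := by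
  by_cases hξR : ξ ≤ R
  · rw [indicator_of_mem (show ξ ∈ Icc 0 R from ⟨hξ, hξR⟩), norm_mul,
      norm_of_nonneg (rpow_nonneg trunc_nonneg _)]
    exact mul_le_mul_of_nonneg_left (rpow_le_rpow trunc_nonneg (trunc_le hα hε) hp.le)
      (norm_nonneg _)
  · have h : α ≤ ε * ξ := hR.trans (mul_le_mul_of_nonneg_left (not_le.1 hξR).le hε)
    rw [trunc_eq_zero_of_le_mul hε h, zero_rpow hp.ne', mul_zero, norm_zero]
    exact indicator_nonneg (fun _ _ => by positivity) ξ

lemma integrable_indicator_Icc_norm_mul (hw : Continuous w) (R : ℝ) :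
    Integrable ((Icc 0 R).indicator fun ξ => ‖w ξ‖ * α ^ p) (volume.restrict (Ioi 0)) :=
  ((hw.norm.mul continuous_const).continuousOn.integrableOn_Icc.integrable_indicator
    measurableSet_Icc).restrict

lemma integrableOn_mul_trunc_rpow (hw : Continuous w) (hα : 0 ≤ α) (hp : 0 < p) (hε : 0 < ε) :
    IntegrableOn (fun ξ => w ξ * trunc α ε ξ ^ p) (Ioi 0) :=
  (integrable_indicator_Icc_norm_mul hw (α / ε)).mono'
    (hw.mul (continuous_trunc_rpow hp.le)).aestronglyMeasurable
    ((ae_restrict_iff' measurableSet_Ioi).2 (Eventually.of_forall fun _ hξ =>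
      norm_mul_trunc_rpow_le hα hp hε.le (by rw [mul_div_cancel₀ _ hε.ne']) (le_of_lt hξ)))

end integrand

-- `-G'(ε)`, obtained by differentiating under the integral sign.
noncomputable def Hfun (σ α ε : ℝ) : ℝ :=
  (σ + 1) * ∫ ξ in Ioi (0 : ℝ), ξ ^ 2 * √(1 + ξ ^ 2) * trunc α ε ξ ^ σ

lemma Gfun_eq (σ α ε : ℝ) : Gfun σ α ε = ∫ ξ in Ioi (0 : ℝ), ξ ^ 2 * trunc α ε ξ ^ (σ + 1) := rfl

lemma Gfun_nonneg (σ α ε : ℝ) : 0 ≤ Gfun σ α ε :=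
  integral_nonneg fun _ => mul_nonneg (sq_nonneg _) (rpow_nonneg trunc_nonneg _)

section GH

variable {σ α : ℝ}

lemma Gfun_eq_zero_of_le (hσ : 0 < σ) (hα : 0 ≤ α) {ε : ℝ} (h : α ≤ ε) : Gfun σ α ε = 0 := by
  simp [Gfun_eq, trunc_eq_zero_of_le hα h, zero_rpow (by linarith : σ + 1 ≠ 0)]

lemma Hfun_eq_zero_of_le (hσ : 0 < σ) (hα : 0 ≤ α) {ε : ℝ} (h : α ≤ ε) : Hfun σ α ε = 0 := by
  simp [Hfun, trunc_eq_zero_of_le hα h, zero_rpow hσ.ne']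

lemma hasDerivAt_Gfun (hσ : 0 < σ) (hα : 0 ≤ α) {ε : ℝ} (hε : 0 < ε) :
    HasDerivAt (Gfun σ α) (-Hfun σ α ε) ε := by
  set w : ℝ → ℝ := fun ξ => -((σ + 1) * (ξ ^ 2 * √(1 + ξ ^ 2)))
  have hw : Continuous w := by fun_prop
  have hsq : Continuous fun ξ : ℝ => ξ ^ 2 := continuous_pow 2
  have key := hasDerivAt_integral_of_dominated_loc_of_deriv_le (μ := volume.restrict (Ioi 0))
    (F := fun x ξ => ξ ^ 2 * trunc α x ξ ^ (σ + 1)) (F' := fun x ξ => w ξ * trunc α x ξ ^ σ)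
    (bound := (Icc 0 (2 * α / ε)).indicator fun ξ => ‖w ξ‖ * α ^ σ)
    (Ioi_mem_nhds (half_lt_self hε))
    (Eventually.of_forall fun _ =>
      (hsq.mul (continuous_trunc_rpow (by linarith))).aestronglyMeasurable)
    (integrableOn_mul_trunc_rpow hsq hα (by linarith) hε)
    (hw.mul (continuous_trunc_rpow hσ.le)).aestronglyMeasurable
    ((ae_restrict_iff' measurableSet_Ioi).2 (Eventually.of_forall fun ξ hξ x hx =>
      norm_mul_trunc_rpow_le hα hσ (by linarith [mem_Ioi.1 hx]) ?_ (le_of_lt hξ)))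
    (integrable_indicator_Icc_norm_mul hw _)
    (Eventually.of_forall fun ξ x _ => ?_)
  · refine key.2.congr_deriv ?_
    rw [Hfun, ← neg_mul, ← integral_const_mul]
    congr 1 with ξ
    ring
  · rw [mul_div_assoc', le_div_iff₀ hε]
    nlinarith [mem_Ioi.1 hx]
  · refine ((hasDerivAt_trunc_rpow (by linarith : 1 < σ + 1)).const_mul (ξ ^ 2)).congr_deriv ?_
    rw [add_sub_cancel_right]
    ring

lemma Hfun_antitoneOn (hσ : 0 < σ) (hα : 0 ≤ α) : AntitoneOn (Hfun σ α) (Ioi 0) := by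
  intro a ha b hb hab
  have hw : Continuous fun ξ : ℝ => ξ ^ 2 * √(1 + ξ ^ 2) := by fun_prop
  refine mul_le_mul_of_nonneg_left (setIntegral_mono_on (integrableOn_mul_trunc_rpow hw hα hσ hb)
    (integrableOn_mul_trunc_rpow hw hα hσ ha) measurableSet_Ioi fun ξ _ => ?_) (by linarith)
  exact mul_le_mul_of_nonneg_left (rpow_le_rpow trunc_nonneg (trunc_anti hab) hσ.le)
    (by positivity)

lemma Hfun_strictAntiOn (hσ : 0 < σ) (hα : 0 ≤ α) : StrictAntiOn (Hfun σ α) (Ioc 0 α) := by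
  intro a ha b hb hab
  set f : ℝ → ℝ → ℝ := fun ε ξ => ξ ^ 2 * √(1 + ξ ^ 2) * trunc α ε ξ ^ σ
  have hw : Continuous fun ξ : ℝ => ξ ^ 2 * √(1 + ξ ^ 2) := by fun_prop
  have hfc : ∀ ε, Continuous (f ε) := fun ε => hw.mul (continuous_trunc_rpow hσ.le)
  have hfi : ∀ ε, 0 < ε → IntegrableOn (f ε) (Ioi 0) := fun ε hε =>
    integrableOn_mul_trunc_rpow hw hα hσ hε
  obtain ⟨ξ₀, hξ₀, hpos⟩ := exists_pos_sub_mul_sqrt_pos (hab.trans_le hb.2)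
  have hdiff : 0 < ∫ ξ in Ioi 0, (f a ξ - f b ξ) := by
    refine setIntegral_pos_of_continuous isOpen_Ioi ((hfc a).sub (hfc b))
      ((hfi a ha.1).sub (hfi b hb.1)) (fun ξ hξ => ?_) hξ₀ ?_
    · exact sub_nonneg.2 (mul_le_mul_of_nonneg_left
        (rpow_le_rpow trunc_nonneg (trunc_anti hab.le) hσ.le) (by positivity))
    · have : 0 < ξ₀ ^ 2 * √(1 + ξ₀ ^ 2) := by positivity
      exact sub_pos.2 (mul_lt_mul_of_pos_left
        (rpow_lt_rpow trunc_nonneg (trunc_lt hab hpos) hσ) this)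
  rw [integral_sub (hfi a ha.1) (hfi b hb.1), sub_pos] at hdiff
  exact mul_lt_mul_of_pos_left hdiff (by linarith)

lemma mul_sub_one_le_Gfun (hσ : 0 < σ) (hα : 0 ≤ α) {ε X : ℝ} (hε : 0 < ε) (hX : 1 ≤ X)
    (hεX : ε * √(1 + X ^ 2) ≤ α / 2) : (α / 2) ^ (σ + 1) * (X - 1) ≤ Gfun σ α ε := by
  refine mul_sub_le_setIntegral measurableSet_Ioi
    (integrableOn_mul_trunc_rpow (continuous_pow 2) hα (by linarith) hε)
    (fun ξ _ => mul_nonneg (sq_nonneg _) (rpow_nonneg trunc_nonneg _)) hX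
    (fun ξ hξ => zero_lt_one.trans_le hξ.1) fun ξ hξ => ?_
  have hsqrt : √(1 + ξ ^ 2) ≤ √(1 + X ^ 2) := sqrt_le_sqrt (by nlinarith [hξ.1, hξ.2])
  have htrunc : α / 2 ≤ trunc α ε ξ :=
    le_max_of_le_left (by nlinarith [mul_le_mul_of_nonneg_left hsqrt hε.le])
  calc (α / 2) ^ (σ + 1) ≤ trunc α ε ξ ^ (σ + 1) :=
        rpow_le_rpow (by linarith) htrunc (by linarith)
    _ ≤ ξ ^ 2 * trunc α ε ξ ^ (σ + 1) :=
        le_mul_of_one_le_left (rpow_nonneg trunc_nonneg _) (by nlinarith [hξ.1])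

lemma tendsto_Gfun_nhdsGT_zero (hσ : 0 < σ) (hα : 0 < α) :
    Tendsto (Gfun σ α) (𝓝[>] 0) atTop := by
  refine tendsto_atTop.2 fun M => ?_
  set c := (α / 2) ^ (σ + 1)
  have hc : 0 < c := by positivity
  set X := max 1 (M / c + 1)
  have hsmall : ∀ᶠ ε in 𝓝[>] (0 : ℝ), ε * √(1 + X ^ 2) ≤ α / 2 :=
    (((continuous_mul_const _).tendsto' 0 0 (zero_mul _)).eventually
      (ge_mem_nhds (half_pos hα))).filter_mono nhdsWithin_le_nhds
  filter_upwards [hsmall, self_mem_nhdsWithin] with ε hεX hε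
  calc M = c * (M / c + 1 - 1) := by field_simp; ring
    _ ≤ c * (X - 1) := by gcongr; exact le_max_right _ _
    _ ≤ Gfun σ α ε := mul_sub_one_le_Gfun hσ hα.le hε (le_max_left _ _) hεX

lemma mul_Gfun_le_Hfun (hσ : 0 < σ) (hα : 0 < α) {ε : ℝ} (hε : 0 < ε) :
    (σ + 1) / α * Gfun σ α ε ≤ Hfun σ α ε := by
  have hw : Continuous fun ξ : ℝ => ξ ^ 2 * √(1 + ξ ^ 2) := by fun_prop
  rw [div_mul_eq_mul_div, div_le_iff₀ hα, Hfun, mul_assoc]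
  refine mul_le_mul_of_nonneg_left ?_ (by linarith)
  rw [Gfun_eq, ← integral_mul_const]
  refine setIntegral_mono_on
    (integrableOn_mul_trunc_rpow (continuous_pow 2) hα.le (by linarith) hε)
    ((integrableOn_mul_trunc_rpow hw hα.le hσ hε).mul_const α) measurableSet_Ioi fun ξ _ => ?_
  have ht : trunc α ε ξ ≤ √(1 + ξ ^ 2) * α :=
    (trunc_le hα.le hε.le).trans (le_mul_of_one_le_left hα.le (one_le_sqrt_one_add_sq ξ))
  calc ξ ^ 2 * trunc α ε ξ ^ (σ + 1) = ξ ^ 2 * trunc α ε ξ ^ σ * trunc α ε ξ := by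
        rw [rpow_add_one' trunc_nonneg (by linarith), mul_assoc]
    _ ≤ ξ ^ 2 * trunc α ε ξ ^ σ * (√(1 + ξ ^ 2) * α) :=
        mul_le_mul_of_nonneg_left ht (mul_nonneg (sq_nonneg _) (rpow_nonneg trunc_nonneg _))
    _ = ξ ^ 2 * √(1 + ξ ^ 2) * trunc α ε ξ ^ σ * α := by ring

lemma tendsto_Hfun_nhdsGT_zero (hσ : 0 < σ) (hα : 0 < α) :
    Tendsto (Hfun σ α) (𝓝[>] 0) atTop :=
  tendsto_atTop_mono' _ (eventually_nhdsWithin_of_forall fun _ hε => mul_Gfun_le_Hfun hσ hα hε)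
    ((tendsto_Gfun_nhdsGT_zero hσ hα).const_mul_atTop (by positivity))

end GH

lemma isMinOn_Ioi_of_hasDerivAt {f f' : ℝ → ℝ} {a c : ℝ} (hac : a < c)
    (hf : ∀ x ∈ Ioi a, HasDerivAt f (f' x) x) (hl : ∀ x ∈ Ioo a c, f' x ≤ 0)
    (hr : ∀ x ∈ Ioi c, 0 ≤ f' x) : IsMinOn f (Ioi a) c := by
  have hcont : ContinuousOn f (Ioi a) := fun x hx => (hf x hx).continuousAt.continuousWithinAt
  intro x hx
  rcases le_total x c with hxc | hcx
  · refine antitoneOn_of_hasDerivWithinAt_nonpos (f' := f') (convex_Ioc a c)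
      (hcont.mono Ioc_subset_Ioi_self) (fun y hy => ?_) (fun y hy => ?_) ⟨hx, hxc⟩ ⟨hac, le_rfl⟩
      hxc
    · rw [interior_Ioc] at hy
      exact (hf y hy.1).hasDerivWithinAt
    · rw [interior_Ioc] at hy
      exact hl y hy
  · refine monotoneOn_of_hasDerivWithinAt_nonneg (f' := f') (convex_Ici c)
      (hcont.mono (Ici_subset_Ioi.2 hac)) (fun y hy => ?_) (fun y hy => ?_) (mem_Ici.2 le_rfl)
      hcx hcx
    · rw [interior_Ici] at hy
      exact (hf y (hac.trans hy)).hasDerivWithinAt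
    · rw [interior_Ici] at hy
      exact hr y hy

section epsStar

variable {σ α : ℝ}

lemma Hfun_pos (hσ : 0 < σ) (hα : 0 < α) {ε : ℝ} (hε : ε ∈ Ioo 0 α) : 0 < Hfun σ α ε := by
  simpa [Hfun_eq_zero_of_le hσ hα.le le_rfl] using
    Hfun_strictAntiOn hσ hα.le ⟨hε.1, hε.2.le⟩ ⟨hα, le_rfl⟩ hε.2

lemma exists_Hfun_eq (hσ : 0 < σ) (hα : 0 < α) {s : ℝ} (hs : 0 < s) :
    ∃ ε ∈ Ioo 0 α, Hfun σ α ε = s := by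
  obtain ⟨δ, hHδ, hδ⟩ := (((tendsto_Hfun_nhdsGT_zero hσ hα).eventually
    (eventually_gt_atTop s)).and (Ioo_mem_nhdsGT hα)).exists
  -- Darboux: the derivative `-Hfun` of `Gfun` has the intermediate value property.
  obtain ⟨ε, hε, hεs⟩ := exists_hasDerivWithinAt_eq_of_gt_of_lt (f := Gfun σ α)
    (f' := fun ε => -Hfun σ α ε) hδ.2.le
    (fun x hx => (hasDerivAt_Gfun hσ hα.le (hδ.1.trans_le hx.1)).hasDerivWithinAt)
    (m := -s) (neg_lt_neg hHδ) (by rw [Hfun_eq_zero_of_le hσ hα.le le_rfl]; linarith)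
  exact ⟨ε, ⟨hδ.1.trans hε.1, hε.2⟩, neg_inj.1 hεs⟩

/-- The minimiser of `ε ↦ ε s + G ε` over `ε > 0`, for `s > 0`. -/
noncomputable def epsStar (σ α s : ℝ) : ℝ :=
  Classical.epsilon fun ε => ε ∈ Ioo 0 α ∧ Hfun σ α ε = s

lemma epsStar_spec (hσ : 0 < σ) (hα : 0 < α) {s : ℝ} (hs : 0 < s) :
    epsStar σ α s ∈ Ioo 0 α ∧ Hfun σ α (epsStar σ α s) = s :=
  Classical.epsilon_spec (exists_Hfun_eq hσ hα hs)

lemma epsStar_lt_iff (hσ : 0 < σ) (hα : 0 < α) {s ε : ℝ} (hs : 0 < s) (hε : ε ∈ Ioc 0 α) :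
    epsStar σ α s < ε ↔ Hfun σ α ε < s := by
  obtain ⟨hmem, hH⟩ := epsStar_spec hσ hα hs
  have := (Hfun_strictAntiOn hσ hα.le).lt_iff_gt hε ⟨hmem.1, hmem.2.le⟩
  rwa [hH, Iff.comm] at this

lemma lt_epsStar_iff (hσ : 0 < σ) (hα : 0 < α) {s ε : ℝ} (hs : 0 < s) (hε : ε ∈ Ioc 0 α) :
    ε < epsStar σ α s ↔ s < Hfun σ α ε := by
  obtain ⟨hmem, hH⟩ := epsStar_spec hσ hα hs
  have := (Hfun_strictAntiOn hσ hα.le).lt_iff_gt ⟨hmem.1, hmem.2.le⟩ hε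
  rwa [hH, Iff.comm] at this

lemma epsStar_Hfun (hσ : 0 < σ) (hα : 0 < α) {ε : ℝ} (hε : ε ∈ Ioo 0 α) :
    epsStar σ α (Hfun σ α ε) = ε := by
  obtain ⟨hmem, hH⟩ := epsStar_spec hσ hα (Hfun_pos hσ hα hε)
  exact (Hfun_strictAntiOn hσ hα.le).injOn ⟨hmem.1, hmem.2.le⟩ ⟨hε.1, hε.2.le⟩ hH

lemma epsStar_strictAntiOn (hσ : 0 < σ) (hα : 0 < α) : StrictAntiOn (epsStar σ α) (Ioi 0) := by
  intro s hs t ht hst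
  obtain ⟨hmem, hH⟩ := epsStar_spec hσ hα hs
  rwa [epsStar_lt_iff hσ hα ht ⟨hmem.1, hmem.2.le⟩, hH]

lemma continuousAt_epsStar (hσ : 0 < σ) (hα : 0 < α) {s : ℝ} (hs : 0 < s) :
    ContinuousAt (epsStar σ α) s := by
  have himage : Ioo (-α) 0 ⊆ (fun t => -epsStar σ α t) '' Ioi 0 := fun y hy =>
    ⟨Hfun σ α (-y), Hfun_pos hσ hα ⟨by linarith [hy.2], by linarith [hy.1]⟩, by
      show -epsStar σ α (Hfun σ α (-y)) = y
      rw [epsStar_Hfun hσ hα ⟨by linarith [hy.2], by linarith [hy.1]⟩, neg_neg]⟩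
  obtain ⟨hmem, -⟩ := epsStar_spec hσ hα hs
  have hneg := (epsStar_strictAntiOn hσ hα).neg.continuousAt_of_image_mem_nhds (Ioi_mem_nhds hs)
    (mem_of_superset (Ioo_mem_nhds (neg_lt_neg hmem.2) (neg_lt_zero.2 hmem.1)) himage)
  exact hneg.neg.congr (Eventually.of_forall fun t => neg_neg (epsStar σ α t))

lemma tendsto_epsStar_atTop (hσ : 0 < σ) (hα : 0 < α) :
    Tendsto (epsStar σ α) atTop (𝓝[>] 0) := by
  have hpos : ∀ᶠ s in atTop, (0 : ℝ) < s := eventually_gt_atTop 0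
  refine tendsto_nhdsWithin_iff.2 ⟨tendsto_order.2 ⟨fun a ha => ?_, fun b hb => ?_⟩,
    hpos.mono fun s hs => (epsStar_spec hσ hα hs).1.1⟩
  · exact hpos.mono fun s hs => ha.trans (epsStar_spec hσ hα hs).1.1
  · have hb' : min b α ∈ Ioc 0 α := ⟨lt_min hb hα, min_le_right _ _⟩
    filter_upwards [hpos, eventually_gt_atTop (Hfun σ α (min b α))] with s hs hHs
    exact ((epsStar_lt_iff hσ hα hs hb').2 hHs).trans_le (min_le_left _ _)

lemma tendsto_epsStar_nhdsGT_zero (hσ : 0 < σ) (hα : 0 < α) :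
    Tendsto (epsStar σ α) (𝓝[>] 0) (𝓝 α) := by
  have hpos : ∀ᶠ s in 𝓝[>] (0 : ℝ), 0 < s := self_mem_nhdsWithin
  refine tendsto_order.2 ⟨fun a ha => ?_, fun b hb => ?_⟩
  · have ha' : max a (α / 2) ∈ Ioo 0 α := ⟨by positivity, max_lt ha (half_lt_self hα)⟩
    filter_upwards [Ioo_mem_nhdsGT (Hfun_pos hσ hα ha')] with s hs
    exact (le_max_left _ _).trans_lt
      ((lt_epsStar_iff hσ hα hs.1 ⟨ha'.1, ha'.2.le⟩).2 hs.2)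
  · exact hpos.mono fun s hs => (epsStar_spec hσ hα hs).1.2.trans hb

end epsStar

lemma le_calG (σ α : ℝ) {s ε : ℝ} (hs : 0 ≤ s) (hε : 0 < ε) :
    ε * -s - Gfun σ α ε ≤ calG σ α s := by
  refine le_csSup ⟨0, ?_⟩ ⟨ε, hε, rfl⟩
  rintro _ ⟨ε', hε', rfl⟩
  nlinarith [Gfun_nonneg σ α ε', mul_nonneg hε'.le hs]

section calG

variable {σ α : ℝ}

lemma calG_zero (hσ : 0 < σ) (hα : 0 < α) : calG σ α 0 = 0 := by
  refine IsGreatest.csSup_eq ⟨⟨α, hα, by simp [Gfun_eq_zero_of_le hσ hα.le le_rfl]⟩, ?_⟩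
  rintro _ ⟨ε, -, rfl⟩
  linarith [Gfun_nonneg σ α ε]

lemma calG_eq (hσ : 0 < σ) (hα : 0 < α) {s : ℝ} (hs : 0 < s) :
    calG σ α s = epsStar σ α s * -s - Gfun σ α (epsStar σ α s) := by
  obtain ⟨hmem, hH⟩ := epsStar_spec hσ hα hs
  have hmin : IsMinOn (fun ε => ε * s + Gfun σ α ε) (Ioi 0) (epsStar σ α s) := by
    refine isMinOn_Ioi_of_hasDerivAt (f' := fun ε => s - Hfun σ α ε) hmem.1
      (fun ε hε => ((hasDerivAt_mul_const s).add (hasDerivAt_Gfun hσ hα.le hε)).congr_deriv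
        (by ring)) (fun ε hε => ?_) (fun ε hε => ?_)
    · linarith [Hfun_antitoneOn hσ hα.le hε.1 hmem.1 hε.2.le]
    · linarith [Hfun_antitoneOn hσ hα.le hmem.1 (hmem.1.trans hε) (le_of_lt hε)]
  refine IsGreatest.csSup_eq ⟨⟨_, hmem.1, rfl⟩, ?_⟩
  rintro _ ⟨ε, hε, rfl⟩
  linarith [isMinOn_iff.1 hmin ε hε]

lemma hasDerivAt_calG (hσ : 0 < σ) (hα : 0 < α) {s : ℝ} (hs : 0 < s) :
    HasDerivAt (calG σ α) (-epsStar σ α s) s := by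
  refine hasDerivAt_of_supporting_lines (g := fun t => -epsStar σ α t) (Ioi_mem_nhds hs)
    (fun t ht u hu => ?_) (continuousAt_epsStar hσ hα hs).neg
  rw [calG_eq hσ hα ht]
  linarith [le_calG σ α (le_of_lt hu) (epsStar_spec hσ hα ht).1.1]

lemma calG_lt_zero (hσ : 0 < σ) (hα : 0 < α) {s : ℝ} (hs : 0 < s) : calG σ α s < 0 := by
  rw [calG_eq hσ hα hs]
  nlinarith [(epsStar_spec hσ hα hs).1.1, Gfun_nonneg σ α (epsStar σ α s)]

lemma hasDerivWithinAt_calG_zero (hσ : 0 < σ) (hα : 0 < α) :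
    HasDerivWithinAt (calG σ α) (-α) (Ici 0) 0 := by
  rw [hasDerivWithinAt_iff_tendsto_slope, Ici_sdiff_left]
  have hslope : ∀ s, slope (calG σ α) 0 s = calG σ α s / s := fun s => by
    rw [slope_def_field, calG_zero hσ hα, sub_zero, sub_zero]
  -- `-α s ≤ 𝒢 s ≤ -ε*(s) s`, and `ε*(s) → α` as `s → 0⁺`.
  refine tendsto_of_tendsto_of_tendsto_of_le_of_le' tendsto_const_nhds
    (tendsto_epsStar_nhdsGT_zero hσ hα).neg (eventually_nhdsWithin_of_forall fun s hs => ?_)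
    (eventually_nhdsWithin_of_forall fun s hs => ?_)
  · rw [hslope, le_div_iff₀ hs]
    linarith [le_calG σ α (le_of_lt hs) hα, Gfun_eq_zero_of_le hσ hα.le le_rfl]
  · rw [hslope, div_le_iff₀ hs, calG_eq hσ hα hs]
    linarith [Gfun_nonneg σ α (epsStar σ α s)]

lemma tendsto_calG_atTop (hσ : 0 < σ) (hα : 0 < α) : Tendsto (calG σ α) atTop atBot := by
  refine tendsto_atBot_mono' _ ?_ (tendsto_neg_atTop_atBot.comp
    ((tendsto_Gfun_nhdsGT_zero hσ hα).comp (tendsto_epsStar_atTop hσ hα)))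
  filter_upwards [eventually_gt_atTop 0] with s hs
  change calG σ α s ≤ -Gfun σ α (epsStar σ α s)
  rw [calG_eq hσ hα hs]
  nlinarith [(epsStar_spec hσ hα hs).1.1]

end calG

/-- Properties of `𝒢`: `𝒢(0) = 0`, right derivative `−α` at `0`,
`𝒢'(s) ∈ (−α,0)` for `s > 0`, `𝒢'(s) → 0` as `s → ∞`, `𝒢 < 0` on `(0,∞)`,
and `𝒢(s) → −∞` as `s → ∞`. -/
theorem stmt_14 (σ α : ℝ) (hσ : σ ∈ Set.Ioo (0:ℝ) (3/2)) (hα : 0 < α) :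
    calG σ α 0 = 0 ∧
    HasDerivWithinAt (calG σ α) (-α) (Set.Ici 0) 0 ∧
    (∀ s : ℝ, 0 < s → deriv (calG σ α) s ∈ Set.Ioo (-α) 0) ∧
    Filter.Tendsto (deriv (calG σ α)) Filter.atTop (nhds 0) ∧
    (∀ s : ℝ, 0 < s → calG σ α s < 0) ∧
    Filter.Tendsto (calG σ α) Filter.atTop Filter.atBot := by
  have hσ₀ := hσ.1
  have hderiv : ∀ s, 0 < s → deriv (calG σ α) s = -epsStar σ α s := fun s hs =>
    (hasDerivAt_calG hσ₀ hα hs).deriv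
  refine ⟨calG_zero hσ₀ hα, hasDerivWithinAt_calG_zero hσ₀ hα, fun s hs => ?_, ?_,
    fun s hs => calG_lt_zero hσ₀ hα hs, tendsto_calG_atTop hσ₀ hα⟩
  · obtain ⟨hpos, hlt⟩ := (epsStar_spec hσ₀ hα hs).1
    rw [hderiv s hs]
    exact ⟨neg_lt_neg hlt, neg_lt_zero.2 hpos⟩
  · have h := ((tendsto_epsStar_atTop hσ₀ hα).mono_right nhdsWithin_le_nhds).neg
    rw [neg_zero] at h
    exact h.congr' ((eventually_gt_atTop 0).mono fun s hs => (hderiv s hs).symm)
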